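/- arXiv:1906.04897 — 6 statements merged into one kernel-verified Lean document; each statement's English description precedes it below -/
import Mathlib

section
/- Every fully normalized binary string s of length n ≥ 5 admits a 3-pblockInterchange: in particular, the prefix block-interchange β(1,1,4,4), which exchanges the first symbol s[1] with the fourth symbol s[4], followed by normalization, produces a normalized binary string of length n − 3. -/
open List

/-- Normalization of a string: repeatedly merge adjacent equal symbols into one
symbol until no two adjacent symbols are equal. -/
def normalizeStr {α : Type*} [DecidableEq α] (l : List α) : List α :=
  l.destutter (· ≠ ·)

/-- A string is grouped if all occurrences of each symbol are consecutive,
i.e. after merging adjacent equal symbols every symbol occurs at most once. -/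
def Grouped {α : Type*} [DecidableEq α] (l : List α) : Prop :=
  (normalizeStr l).Nodup

/-- The prefix block-interchange β(1,x,y,z) (1-based indices, 1 ≤ x < y ≤ z ≤ n),
before normalization: s[y]…s[z] s[x+1]…s[y−1] s[1]…s[x] s[z+1]…s[n]. -/
def pbiRaw {α : Type*} (l : List α) (x y z : ℕ) : List α :=
  (l.drop (y - 1)).take (z - y + 1) ++ (l.drop x).take (y - 1 - x) ++
    l.take x ++ l.drop z

/-- Prefix block-interchange β(1,x,y,z) followed by normalization. -/
def pbi {α : Type*} [DecidableEq α] (l : List α) (x y z : ℕ) : List α :=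
  normalizeStr (pbiRaw l x y z)

/-- One prefix block-interchange operation transforming `s` into `t`. -/
def PbiStep {α : Type*} [DecidableEq α] (s t : List α) : Prop :=
  ∃ x y z, 1 ≤ x ∧ x < y ∧ y ≤ z ∧ z ≤ s.length ∧ t = pbi s x y z

/-- A restricted prefix block-interchange (2 ≤ x < y ≤ z ≤ n) keeps the first
symbol fixed, before normalization:
s[1] s[y]…s[z] s[x+1]…s[y−1] s[2]…s[x] s[z+1]…s[n]. -/
def rpbiRaw {α : Type*} (l : List α) (x y z : ℕ) : List α :=
  l.take 1 ++ (l.drop (y - 1)).take (z - y + 1) ++ (l.drop x).take (y - 1 - x) ++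
    (l.drop 1).take (x - 1) ++ l.drop z

/-- Restricted prefix block-interchange followed by normalization. -/
def rpbi {α : Type*} [DecidableEq α] (l : List α) (x y z : ℕ) : List α :=
  normalizeStr (rpbiRaw l x y z)

/-- One restricted prefix block-interchange operation transforming `s` into `t`. -/
def RpbiStep {α : Type*} [DecidableEq α] (s t : List α) : Prop :=
  ∃ x y z, 2 ≤ x ∧ x < y ∧ y ≤ z ∧ z ≤ s.length ∧ t = rpbi s x y z

/-- `StepsTo R k s t` : `t` is obtained from `s` by exactly `k` `R`-operations. -/
def StepsTo {α : Type*} (R : List α → List α → Prop) : ℕ → List α → List α → Prop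
  | 0, s, t => s = t
  | k + 1, s, t => ∃ u, R s u ∧ StepsTo R k u t

/-! A normalized binary string alternates, so it has the form `a b a b a t`. Exchanging the first
and fourth symbols gives `b b a a a t`, whose normalization is `b a t`, the string with its first
three symbols removed; this is again normalized and three symbols shorter. -/

theorem Fin.two_eq_of_ne_of_ne {x y z : Fin 2} (hxy : x ≠ y) (hyz : y ≠ z) : x = z := by
  omega

section Normalize

variable {α : Type*} [DecidableEq α]

theorem destutter'_ne_cons_self (a : α) (l : List α) :
    (a :: l).destutter' (· ≠ ·) a = l.destutter' (· ≠ ·) a :=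
  destutter'_cons_neg _ (not_not_intro rfl)

theorem destutter'_ne_cons_of_ne {x a : α} (h : x ≠ a) (l : List α) :
    (a :: l).destutter' (· ≠ ·) x = x :: l.destutter' (· ≠ ·) a :=
  destutter'_cons_pos _ h

theorem destutter'_ne_append_cons_cons_self (x a : α) (l₁ l₂ : List α) :
    (l₁ ++ a :: a :: l₂).destutter' (· ≠ ·) x = (l₁ ++ a :: l₂).destutter' (· ≠ ·) x := by
  induction l₁ generalizing x with
  | nil =>
    by_cases hxa : x = a
    · rw [hxa, nil_append, nil_append, destutter'_ne_cons_self]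
    · rw [nil_append, nil_append, destutter'_ne_cons_of_ne hxa, destutter'_ne_cons_of_ne hxa,
        destutter'_ne_cons_self]
  | cons y l₁ ih =>
    by_cases hxy : x = y
    · rw [hxy, cons_append, cons_append, destutter'_ne_cons_self, destutter'_ne_cons_self, ih]
    · rw [cons_append, cons_append, destutter'_ne_cons_of_ne hxy, destutter'_ne_cons_of_ne hxy, ih]

theorem normalizeStr_append_cons_cons_self (a : α) (l₁ l₂ : List α) :
    normalizeStr (l₁ ++ a :: a :: l₂) = normalizeStr (l₁ ++ a :: l₂) := by
  cases l₁ with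
  | nil => rw [nil_append, nil_append, normalizeStr, normalizeStr, destutter_cons', destutter_cons',
      destutter'_ne_cons_self]
  | cons y l₁ => rw [normalizeStr, normalizeStr, cons_append, cons_append, destutter_cons',
      destutter_cons', destutter'_ne_append_cons_cons_self]

theorem normalizeStr_of_isChain {l : List α} (h : l.IsChain (· ≠ ·)) : normalizeStr l = l :=
  destutter_of_isChain _ _ h

end Normalize

theorem pbiRaw_one_four_four {α : Type*} (a b c d : α) (t : List α) :
    pbiRaw (a :: b :: c :: d :: t) 1 4 4 = d :: b :: c :: a :: t := by
  simp [pbiRaw]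

theorem pbi_one_four_four_of_isChain_ne {s : List (Fin 2)} (hs : s.IsChain (· ≠ ·))
    (hn : 5 ≤ s.length) : pbi s 1 4 4 = s.drop 3 := by
  obtain ⟨a, b, c, d, e, t, rfl⟩ : ∃ a b c d e t, s = a :: b :: c :: d :: e :: t := by
    match s, hn with
    | a :: b :: c :: d :: e :: t, _ => exact ⟨a, b, c, d, e, t, rfl⟩
  obtain ⟨hab, hbc, hcd, hde, het⟩ : a ≠ b ∧ b ≠ c ∧ c ≠ d ∧ d ≠ e ∧ (e :: t).IsChain (· ≠ ·) := by
    simpa only [isChain_cons_cons] using hs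
  obtain rfl : a = c := Fin.two_eq_of_ne_of_ne hab hbc
  obtain rfl : b = d := Fin.two_eq_of_ne_of_ne hbc hcd
  obtain rfl : a = e := Fin.two_eq_of_ne_of_ne hab hde
  calc pbi (a :: b :: a :: b :: a :: t) 1 4 4
      = normalizeStr (b :: b :: a :: a :: a :: t) := by rw [pbi, pbiRaw_one_four_four]
    _ = normalizeStr (b :: a :: a :: a :: t) := normalizeStr_append_cons_cons_self b [] _
    _ = normalizeStr (b :: a :: a :: t) := normalizeStr_append_cons_cons_self a [b] _
    _ = normalizeStr (b :: a :: t) := normalizeStr_append_cons_cons_self a [b] _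
    _ = b :: a :: t := normalizeStr_of_isChain (isChain_cons_cons.mpr ⟨hab.symm, het⟩)

/-- Every fully normalized binary string s of length n ≥ 5 admits a
3-pblockInterchange: in particular β(1,1,4,4), exchanging s[1] with s[4],
followed by normalization, produces a normalized binary string of length n − 3. -/
theorem stmt_2 (s : List (Fin 2)) (hnorm : s.Chain' (· ≠ ·)) (hn : 5 ≤ s.length) :
    (pbi s 1 4 4).length = s.length - 3 ∧ (pbi s 1 4 4).Chain' (· ≠ ·) := by
  rw [pbi_one_four_four_of_isChain_ne hnorm hn]
  exact ⟨length_drop, hnorm.drop 3⟩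
end

section
/- Let s be a fully normalized binary string of length n ≥ 5. Then the grouping distance of s under prefix block-interchanges satisfies d^g_pbi(s) = ⌈(n−2)/3⌉. -/
open List

/-! A fully normalized binary string is determined by its first symbol and its length.
Cutting a normalized string into four blocks and normalizing their rearrangement loses at most one
symbol at each of the three junctions, so every operation shortens it by at most 3, while a
normalized grouped binary string has length at most 2. Conversely `β(1,1,4,4)` turns `ababa…`
into `bbaaa…`, whose normalization is `ba…`, three symbols shorter, and strings of length 3 or 4
reach length 2 in one step. Hence the distance is `⌊n/3⌋ = ⌈(n-2)/3⌉`. -/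

section Destutter

variable {α : Type*} [DecidableEq α]

lemma length_destutter'_append_le : ∀ (l m : List α) (a : α),
    (l.destutter' (· ≠ ·) a).length + (m.destutter (· ≠ ·)).length ≤
      ((l ++ m).destutter' (· ≠ ·) a).length + 1
  | [], m, a => by
    have := length_destutter_ne_le_length_destutter_cons (a := a) (l := m)
    rw [destutter_cons'] at this
    simp only [destutter'_nil, nil_append, length_singleton]
    omega
  | c :: l, m, a => by
    by_cases h : a ≠ c
    · have := length_destutter'_append_le l m c
      simp only [cons_append, destutter'_cons_pos (R := (· ≠ ·)) _ h, length_cons]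
      omega
    · simpa [destutter'_cons_neg _ h] using length_destutter'_append_le l m a

lemma length_destutter_append_le (l m : List α) :
    (l.destutter (· ≠ ·)).length + (m.destutter (· ≠ ·)).length ≤
      ((l ++ m).destutter (· ≠ ·)).length + 1 := by
  cases l with
  | nil => simp
  | cons a l => simpa [destutter_cons'] using length_destutter'_append_le l m a

theorem List.IsChain.length_add_le_length_destutter_append {l : List α} (hl : l.IsChain (· ≠ ·))
    (m : List α) :
    l.length + (m.destutter (· ≠ ·)).length ≤ ((l ++ m).destutter (· ≠ ·)).length + 1 := by
  simpa [destutter_of_isChain _ _ hl] using length_destutter_append_le l m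

lemma length_le_card_of_grouped [Fintype α] {t : List α} (ht : t.IsChain (· ≠ ·))
    (hg : Grouped t) : t.length ≤ Fintype.card α := by
  rw [Grouped, normalizeStr, destutter_of_isChain _ _ ht] at hg
  exact hg.length_le_card

end Destutter

section Pbi

variable {α : Type*} [DecidableEq α]

lemma isChain_pbi (s : List α) (x y z : ℕ) : (pbi s x y z).IsChain (· ≠ ·) :=
  isChain_destutter _ _

lemma length_le_length_pbi_add_three {s : List α} (hs : s.IsChain (· ≠ ·)) {x y z : ℕ}
    (hx : 1 ≤ x) (hxy : x < y) (hyz : y ≤ z) (hz : z ≤ s.length) :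
    s.length ≤ (pbi s x y z).length + 3 := by
  have infix_chain : ∀ i j, ((s.drop i).take j).IsChain (· ≠ ·) := fun i j =>
    hs.infix (((s.drop i).take_prefix j).isInfix.trans (s.drop_suffix i).isInfix)
  set A := (s.drop (y - 1)).take (z - y + 1)
  set B := (s.drop x).take (y - 1 - x)
  set C := s.take x
  set D := s.drop z
  have hA := (infix_chain (y - 1) (z - y + 1)).length_add_le_length_destutter_append (B ++ C ++ D)
  have hB := (infix_chain x (y - 1 - x)).length_add_le_length_destutter_append (C ++ D)
  have hC := (hs.prefix (s.take_prefix x)).length_add_le_length_destutter_append D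
  have hD : (D.destutter (· ≠ ·)).length = D.length :=
    congrArg length (destutter_of_isChain _ _ (hs.suffix (s.drop_suffix z)))
  have hpbi : pbi s x y z = (A ++ (B ++ C ++ D)).destutter (· ≠ ·) := by
    simp only [pbi, pbiRaw, normalizeStr, append_assoc]; rfl
  simp only [A, B, C, D, length_take, length_drop, append_assoc] at hA hB hC hD hpbi ⊢
  rw [hpbi]
  omega

lemma isChain_and_length_le_of_stepsTo : ∀ {k : ℕ} {s t : List α}, s.IsChain (· ≠ ·) →
    StepsTo PbiStep k s t → t.IsChain (· ≠ ·) ∧ s.length ≤ t.length + 3 * k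
  | 0, s, _, hs, rfl => ⟨hs, by omega⟩
  | k + 1, s, t, hs, ⟨_, ⟨x, y, z, hx, hxy, hyz, hz, rfl⟩, hrest⟩ => by
    obtain ⟨ht, hlen⟩ := isChain_and_length_le_of_stepsTo (isChain_pbi s x y z) hrest
    have := length_le_length_pbi_add_three hs hx hxy hyz hz
    exact ⟨ht, by omega⟩

end Pbi

section Alternating

lemma Fin.two_add_one_add_one (a : Fin 2) : a + 1 + 1 = a := by
  revert a; decide

lemma Fin.two_ne_add_one (a : Fin 2) : a ≠ a + 1 := by
  revert a; decide

lemma Fin.two_eq_add_one_of_ne {a b : Fin 2} (h : a ≠ b) : b = a + 1 := by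
  revert a b; decide

def alternating : Fin 2 → ℕ → List (Fin 2)
  | _, 0 => []
  | a, n + 1 => a :: alternating (a + 1) n

lemma alternating_add_two (a : Fin 2) (n : ℕ) :
    alternating a (n + 2) = a :: (a + 1) :: alternating a n := by
  rw [alternating, alternating, Fin.two_add_one_add_one]

lemma isChain_alternating : ∀ (a : Fin 2) (n : ℕ), (alternating a n).IsChain (· ≠ ·)
  | _, 0 => isChain_nil
  | _, 1 => isChain_singleton _
  | a, n + 2 => by
    rw [alternating]
    exact isChain_cons_cons.mpr ⟨Fin.two_ne_add_one a, isChain_alternating (a + 1) (n + 1)⟩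

lemma eq_alternating_of_isChain :
    ∀ {s : List (Fin 2)}, s.IsChain (· ≠ ·) → ∃ a, s = alternating a s.length
  | [], _ => ⟨0, rfl⟩
  | a :: l, h => by
    refine ⟨a, congrArg (a :: ·) ?_⟩
    cases l with
    | nil => rfl
    | cons b l =>
      obtain ⟨c, hc⟩ := eq_alternating_of_isChain h.tail
      have hcb : c = b := (List.cons.inj hc).1.symm
      have hba : b = a + 1 := Fin.two_eq_add_one_of_ne (isChain_cons_cons.mp h).1
      subst hcb hba
      exact hc

lemma grouped_alternating_of_le_two (a : Fin 2) {n : ℕ} (hn : n ≤ 2) :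
    Grouped (alternating a n) := by
  unfold Grouped normalizeStr
  interval_cases n <;> revert a <;> decide

lemma pbiStep_alternating_add_five (a : Fin 2) (n : ℕ) :
    PbiStep (alternating a (n + 5)) (alternating (a + 1) (n + 2)) := by
  refine ⟨1, 4, 4, le_rfl, by omega, le_rfl, by simp [alternating], ?_⟩
  set b := a + 1
  have hab : a ≠ b := Fin.two_ne_add_one a
  have hs : alternating a (n + 5) = a :: b :: a :: b :: a :: alternating b n := by
    rw [alternating_add_two, alternating_add_two, alternating]
  rw [pbi, normalizeStr, hs, alternating_add_two, Fin.two_add_one_add_one]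
  symm
  change (b :: b :: a :: a :: a :: alternating b n).destutter (· ≠ ·) = _
  rw [destutter_cons', destutter'_cons_neg _ (not_not.mpr rfl), destutter'_cons_pos _ hab.symm,
    destutter'_cons_neg _ (not_not.mpr rfl), destutter'_cons_neg _ (not_not.mpr rfl),
    destutter'_of_isChain_cons _ _ (isChain_alternating a (n + 1))]

lemma pbiStep_alternating_of_le_four (a : Fin 2) {n : ℕ} (h3 : 3 ≤ n) (h4 : n ≤ 4) :
    PbiStep (alternating a n) (alternating (a + 1) 2) := by
  interval_cases n
  · exact ⟨1, 2, 3, le_rfl, by omega, by omega, by simp [alternating], by revert a; decide⟩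
  · exact ⟨1, 4, 4, le_rfl, by omega, le_rfl, by simp [alternating], by revert a; decide⟩

lemma exists_stepsTo_grouped_alternating (n : ℕ) :
    ∀ a : Fin 2, ∃ t, StepsTo PbiStep (n / 3) (alternating a n) t ∧ Grouped t := by
  induction n using Nat.strong_induction_on with
  | _ n ih =>
    intro a
    rcases (show n ≤ 2 ∨ 3 ≤ n ∧ n ≤ 4 ∨ 5 ≤ n by omega) with hn | ⟨h3, h4⟩ | h5
    · rw [Nat.div_eq_of_lt (by omega)]
      exact ⟨_, rfl, grouped_alternating_of_le_two a hn⟩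
    · rw [show n / 3 = 1 by omega]
      exact ⟨_, ⟨_, pbiStep_alternating_of_le_four a h3 h4, rfl⟩,
        grouped_alternating_of_le_two (a + 1) le_rfl⟩
    · obtain ⟨m, rfl⟩ : ∃ m, n = m + 5 := ⟨n - 5, by omega⟩
      obtain ⟨t, ht, hg⟩ := ih (m + 2) (by omega) (a + 1)
      refine ⟨t, ?_, hg⟩
      rw [show (m + 5) / 3 = (m + 2) / 3 + 1 by omega]
      exact ⟨_, pbiStep_alternating_add_five a m, ht⟩

end Alternating

theorem stmt_3_general (s : List (Fin 2)) (hnorm : s.Chain' (· ≠ ·)) :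
    IsLeast {k | ∃ t, StepsTo PbiStep k s t ∧ Grouped t}
      ((s.length - 2 + 2) / 3) := by
  constructor
  · obtain ⟨a, ha⟩ := eq_alternating_of_isChain hnorm
    have := exists_stepsTo_grouped_alternating s.length a
    rwa [← ha, show s.length / 3 = (s.length - 2 + 2) / 3 by omega] at this
  · rintro k ⟨t, hst, hg⟩
    obtain ⟨ht, hlen⟩ := isChain_and_length_le_of_stepsTo hnorm hst
    have := length_le_card_of_grouped ht hg
    rw [Fintype.card_fin] at this
    omega

/-- For a fully normalized binary string s of length n ≥ 5, the
grouping distance under prefix block-interchanges equals ⌈(n−2)/3⌉. -/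
theorem stmt_3 (s : List (Fin 2)) (hnorm : s.Chain' (· ≠ ·)) (hn : 5 ≤ s.length) :
    IsLeast {k | ∃ t, StepsTo PbiStep k s t ∧ Grouped t}
      ((s.length - 2 + 2) / 3) :=
  stmt_3_general s hnorm
end

section
/- Every fully normalized binary string s of length n ≥ 7 admits a restricted prefix block-interchange that, after normalization, produces a normalized binary string of length n − 4 (a 4-pblockInterchange); in particular, exchanging the block s[2]s[3] with the block s[5]s[6] is such an operation. -/
open List

section Normalize

variable {α : Type*} [DecidableEq α]

theorem normalizeStr_cons_cons_self (a : α) (l : List α) :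
    normalizeStr (a :: a :: l) = normalizeStr (a :: l) := by
  rw [normalizeStr, destutter_cons', destutter'_cons_neg _ (not_not_intro rfl), normalizeStr,
    destutter_cons']

theorem normalizeStr_cons_cons_of_ne {a b : α} (h : a ≠ b) (l : List α) :
    normalizeStr (a :: b :: l) = a :: normalizeStr (b :: l) := by
  simp only [normalizeStr, destutter_cons', destutter'_cons_pos _ h]

end Normalize

theorem rpbiRaw_three_five_six {α : Type*} (a b c d e f : α) (u : List α) :
    rpbiRaw (a :: b :: c :: d :: e :: f :: u) 3 5 6 = a :: e :: f :: d :: b :: c :: u := by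
  simp [rpbiRaw]

/-- Moving `s[5]s[6]` in front of `s[2]s[3]` in `abababa…` creates the runs `aa bbb aa`, each of
which collapses to one symbol. -/
theorem rpbi_three_five_six_of_alternating {α : Type*} [DecidableEq α] {a b : α} (hab : a ≠ b)
    {u : List α} (hu : (a :: u).IsChain (· ≠ ·)) :
    rpbi (a :: b :: a :: b :: a :: b :: a :: u) 3 5 6 = a :: b :: a :: u := by
  rw [rpbi, rpbiRaw_three_five_six, normalizeStr_cons_cons_self,
    normalizeStr_cons_cons_of_ne hab, normalizeStr_cons_cons_self, normalizeStr_cons_cons_self,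
    normalizeStr_cons_cons_of_ne hab.symm, normalizeStr_cons_cons_self, normalizeStr_of_isChain hu]

theorem Fin.two_eq_of_ne_of_ne_s6 {a b c : Fin 2} (hab : a ≠ b) (hbc : b ≠ c) : c = a := by
  omega

theorem List.IsChain.eq_alternating_of_fin_two {s : List (Fin 2)} (hs : s.IsChain (· ≠ ·))
    (hn : 7 ≤ s.length) :
    ∃ a b u, a ≠ b ∧ (a :: u).IsChain (· ≠ ·) ∧ s = a :: b :: a :: b :: a :: b :: a :: u := by
  match s, hn with
  | a :: b :: c :: d :: e :: f :: g :: u, _ =>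
    simp only [isChain_cons_cons] at hs
    obtain ⟨hab, hbc, hcd, hde, hef, hfg, hu⟩ := hs
    obtain rfl := Fin.two_eq_of_ne_of_ne_s6 hab hbc
    obtain rfl := Fin.two_eq_of_ne_of_ne_s6 hbc hcd
    obtain rfl := Fin.two_eq_of_ne_of_ne_s6 hcd hde
    obtain rfl := Fin.two_eq_of_ne_of_ne_s6 hde hef
    obtain rfl := Fin.two_eq_of_ne_of_ne_s6 hef hfg
    exact ⟨_, _, u, hab, hu, rfl⟩

/-- Every fully normalized binary string s of length n ≥ 7 admits a
restricted prefix block-interchange producing, after normalization, a normalized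
binary string of length n − 4; in particular exchanging the block s[2]s[3] with
the block s[5]s[6] is such an operation. -/
theorem stmt_6 (s : List (Fin 2)) (hnorm : s.Chain' (· ≠ ·)) (hn : 7 ≤ s.length) :
    (∃ x y z, 2 ≤ x ∧ x < y ∧ y ≤ z ∧ z ≤ s.length ∧
      (rpbi s x y z).length = s.length - 4 ∧ (rpbi s x y z).Chain' (· ≠ ·)) ∧
    (rpbi s 3 5 6).length = s.length - 4 ∧ (rpbi s 3 5 6).Chain' (· ≠ ·) := by
  obtain ⟨a, b, u, hab, hu, rfl⟩ := hnorm.eq_alternating_of_fin_two hn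
  have hchain : (a :: b :: a :: u).IsChain (· ≠ ·) := hu.cons_cons hab.symm |>.cons_cons hab
  have hresult : (rpbi (a :: b :: a :: b :: a :: b :: a :: u) 3 5 6).length = u.length + 3 ∧
      (rpbi (a :: b :: a :: b :: a :: b :: a :: u) 3 5 6).IsChain (· ≠ ·) := by
    rw [rpbi_three_five_six_of_alternating hab hu]
    exact ⟨rfl, hchain⟩
  exact ⟨⟨3, 5, 6, by norm_num, by norm_num, by norm_num, by simp, hresult⟩, hresult⟩
end

section
/- Every fully normalized ternary string of length n > 3 admits a prefix block-interchange whose normalized result is strictly shorter than n (i.e., one can always perform at least a 1-pblockInterchange). Concretely, for some prefix s[1]…s[l] and some block s[i]…s[j] with 1 ≤ l < i ≤ j < n, at least one of s[1] = s[i−1], s[j] = s[l+1], or s[l] = s[j+1] holds, and the corresponding prefix block-interchange reduces the normalized length by at least 1. -/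
open List

theorem length_normalizeStr_lt_of_not_isChain {α : Type*} [DecidableEq α] {l : List α}
    (h : ¬ l.IsChain (· ≠ ·)) : (normalizeStr l).length < l.length := by
  refine lt_of_le_of_ne (destutter_sublist _ l).length_le fun hlen => h ?_
  rw [← destutter_eq_self_iff]
  exact (destutter_sublist _ l).eq_of_length hlen

theorem length_pbiRaw {α : Type*} {l : List α} {x y z : ℕ} (hxy : x < y) (hyz : y ≤ z)
    (hz : z ≤ l.length) : (pbiRaw l x y z).length = l.length := by
  simp only [pbiRaw, length_append, length_take, length_drop]
  omega

theorem length_pbi_lt_of_not_isChain {α : Type*} [DecidableEq α] {l : List α} {x y z : ℕ}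
    (hxy : x < y) (hyz : y ≤ z) (hz : z ≤ l.length) (h : ¬ (pbiRaw l x y z).IsChain (· ≠ ·)) :
    (pbi l x y z).length < l.length :=
  (length_normalizeStr_lt_of_not_isChain h).trans_eq (length_pbiRaw hxy hyz hz)

theorem Fin.eq_or_eq_or_eq_of_ne_of_ne_of_ne {a b c d : Fin 3}
    (hab : a ≠ b) (hbc : b ≠ c) (hcd : c ≠ d) : c = a ∨ d = b ∨ d = a := by
  revert a b c d
  decide

theorem stmt_9_general (s : List (Fin 3)) (hnorm : s.Chain' (· ≠ ·))
    (hn : 3 < s.length) :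
    ∃ l i j, 1 ≤ l ∧ l < i ∧ i ≤ j ∧ j < s.length ∧
      (s.getD 0 0 = s.getD (i - 2) 0 ∨ s.getD (j - 1) 0 = s.getD l 0 ∨
        s.getD (l - 1) 0 = s.getD j 0) ∧
      (pbi s l i j).length < s.length := by
  obtain ⟨a, b, c, d, t, rfl⟩ : ∃ a b c d t, s = a :: b :: c :: d :: t := by
    rcases s with _ | ⟨a, _ | ⟨b, _ | ⟨c, _ | ⟨d, t⟩⟩⟩⟩ <;> simp at hn
    exact ⟨a, b, c, d, t, rfl⟩
  have hchain : (a :: b :: c :: d :: t).IsChain (· ≠ ·) := hnorm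
  obtain ⟨hab, hbc, hcd, -⟩ : a ≠ b ∧ b ≠ c ∧ c ≠ d ∧ (d :: t).IsChain (· ≠ ·) := by
    simpa [isChain_cons_cons] using hchain
  -- Each case puts two equal symbols side by side: `b a a d …`, `c a b b …`, `b c a a …`.
  rcases Fin.eq_or_eq_or_eq_of_ne_of_ne_of_ne hab hbc hcd with hca | hdb | hda
  · refine ⟨1, 2, 2, le_rfl, one_lt_two, le_rfl, by simp, Or.inl rfl, ?_⟩
    exact length_pbi_lt_of_not_isChain one_lt_two le_rfl (by simp) (by simp [pbiRaw, hca])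
  · refine ⟨2, 3, 3, one_le_two, by norm_num, le_rfl, by simp, Or.inr (Or.inr hdb.symm), ?_⟩
    exact length_pbi_lt_of_not_isChain (by norm_num) le_rfl (by simp) (by simp [pbiRaw, hdb])
  · refine ⟨1, 2, 3, le_rfl, one_lt_two, by norm_num, by simp, Or.inr (Or.inr hda.symm), ?_⟩
    exact length_pbi_lt_of_not_isChain one_lt_two (by norm_num) (by simp) (by simp [pbiRaw, hda])

/-- Every fully normalized ternary string of length n > 3 admits a
prefix block-interchange whose normalized result is strictly shorter than n:
for some prefix s[1]…s[l] and block s[i]…s[j] with 1 ≤ l < i ≤ j < n, at least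
one of s[1] = s[i−1], s[j] = s[l+1], s[l] = s[j+1] holds (1-based), and the
corresponding prefix block-interchange β(1,l,i,j) reduces the normalized length
by at least 1. -/
theorem stmt_9 (s : List (Fin 3)) (hnorm : s.Chain' (· ≠ ·))
    (h0 : 0 ∈ s) (h1 : 1 ∈ s) (h2 : 2 ∈ s) (hn : 3 < s.length) :
    ∃ l i j, 1 ≤ l ∧ l < i ∧ i ≤ j ∧ j < s.length ∧
      (s.getD 0 0 = s.getD (i - 2) 0 ∨ s.getD (j - 1) 0 = s.getD l 0 ∨
        s.getD (l - 1) 0 = s.getD j 0) ∧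
      (pbi s l i j).length < s.length :=
  stmt_9_general s hnorm hn
end

section
/- Each of the length-3 ternary strings 210, 102, 120 and 201 can be transformed into the sorted string 012 by a single prefix block-interchange, while 021 can be transformed into 012 by two prefix block-interchanges; consequently, every grouped fully normalized ternary string can be sorted using at most two additional prefix block-interchanges. -/
open List

/-! A grouped string without adjacent repetitions has no repeated symbol at all, so a grouped
fully normalized ternary string is one of the six permutations of `012`; each of these is sorted
by at most two prefix block-interchanges, given explicitly. -/

lemma nodup_of_isChain_ne_of_grouped {α : Type*} [DecidableEq α] {s : List α}
    (hc : s.IsChain (· ≠ ·)) (hg : Grouped s) : s.Nodup := by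
  rwa [Grouped, normalizeStr, destutter_of_isChain _ s hc] at hg

lemma perm_012_of_nodup {s : List (Fin 3)} (hs : s.Nodup) (h0 : 0 ∈ s) (h1 : 1 ∈ s)
    (h2 : 2 ∈ s) : s ~ [0, 1, 2] :=
  (perm_ext_iff_of_nodup hs (by decide)).2 fun a => by fin_cases a <;> simp [h0, h1, h2]

lemma StepsTo.single {α : Type*} {R : List α → List α → Prop} {s t : List α} (h : R s t) :
    StepsTo R 1 s t :=
  ⟨t, h, rfl⟩

lemma pbiStep_210 : PbiStep ([2, 1, 0] : List (Fin 3)) [0, 1, 2] := ⟨1, 3, 3, by decide⟩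

lemma pbiStep_102 : PbiStep ([1, 0, 2] : List (Fin 3)) [0, 1, 2] := ⟨1, 2, 2, by decide⟩

lemma pbiStep_120 : PbiStep ([1, 2, 0] : List (Fin 3)) [0, 1, 2] := ⟨2, 3, 3, by decide⟩

lemma pbiStep_201 : PbiStep ([2, 0, 1] : List (Fin 3)) [0, 1, 2] := ⟨1, 2, 3, by decide⟩

lemma stepsTo_021 : StepsTo PbiStep 2 ([0, 2, 1] : List (Fin 3)) [0, 1, 2] :=
  ⟨[2, 0, 1], ⟨1, 2, 2, by decide⟩, StepsTo.single pbiStep_201⟩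

lemma exists_stepsTo_012_of_perm {s : List (Fin 3)} (hs : s ~ [0, 1, 2]) :
    ∃ k ≤ 2, StepsTo PbiStep k s [0, 1, 2] := by
  have hperms : permutations' ([0, 1, 2] : List (Fin 3)) ~
      [[0, 1, 2], [0, 2, 1], [1, 0, 2], [1, 2, 0], [2, 0, 1], [2, 1, 0]] := by
    decide
  have hmem := hperms.subset (mem_permutations'.2 hs)
  simp only [mem_cons, not_mem_nil, or_false] at hmem
  rcases hmem with rfl | rfl | rfl | rfl | rfl | rfl
  · exact ⟨0, zero_le_two, rfl⟩
  · exact ⟨2, le_rfl, stepsTo_021⟩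
  · exact ⟨1, one_le_two, .single pbiStep_102⟩
  · exact ⟨1, one_le_two, .single pbiStep_120⟩
  · exact ⟨1, one_le_two, .single pbiStep_201⟩
  · exact ⟨1, one_le_two, .single pbiStep_210⟩

/-- Each of 210, 102, 120 and 201 can be transformed into the
sorted string 012 by a single prefix block-interchange, while 021 can be
transformed into 012 by two prefix block-interchanges; consequently, every
grouped fully normalized ternary string can be sorted using at most two
additional prefix block-interchanges. -/
theorem stmt_16 :
    PbiStep ([2, 1, 0] : List (Fin 3)) [0, 1, 2] ∧
    PbiStep ([1, 0, 2] : List (Fin 3)) [0, 1, 2] ∧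
    PbiStep ([1, 2, 0] : List (Fin 3)) [0, 1, 2] ∧
    PbiStep ([2, 0, 1] : List (Fin 3)) [0, 1, 2] ∧
    StepsTo PbiStep 2 ([0, 2, 1] : List (Fin 3)) [0, 1, 2] ∧
    (∀ s : List (Fin 3), s.Chain' (· ≠ ·) → 0 ∈ s → 1 ∈ s → 2 ∈ s →
      Grouped s → ∃ k, k ≤ 2 ∧ StepsTo PbiStep k s [0, 1, 2]) :=
  ⟨pbiStep_210, pbiStep_102, pbiStep_120, pbiStep_201, stepsTo_021,
    fun _ hc h0 h1 h2 hg => exists_stepsTo_012_of_perm <|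
      perm_012_of_nodup (nodup_of_isChain_ne_of_grouped hc hg) h0 h1 h2⟩
end

section
/- Let s be a fully normalized ternary string of length n. Then the sorting distance of s under prefix block-interchanges satisfies d^s_pbi(s) ≤ ⌈(n−2)/2⌉ + 2. -/
open List

/-!
A prefix block-interchange `A B C D ↦ C B A D` applied to a normalized string shortens it by
one symbol for each junction `C|B`, `B|A`, `A|D` at which equal symbols meet. Over three
symbols, a case analysis on the occurrences of the first symbol shows that every normalized
string of length at least `6` other than `abcbca` admits a move creating two such junctions,
and every one of length at least `4` a move creating one; `abcbca` reaches length `3` in two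
moves, and strings of length at most `3` are sorted within two moves by a finite check.
Strong induction on the length then gives the bound `⌈(n - 2) / 2⌉ + 2`.
-/

section Normalization

variable {α : Type*} [DecidableEq α]

theorem destutter'_ne_append_cons_cons (b a : α) (u v : List α) :
    (u ++ a :: a :: v).destutter' (· ≠ ·) b = (u ++ a :: v).destutter' (· ≠ ·) b := by
  induction u generalizing b with
  | nil => by_cases h : b = a <;> simp [h]
  | cons x u ih => simp only [List.cons_append, List.destutter'_cons, ih]

theorem normalizeStr_append_cons_cons (u v : List α) (a : α) :
    normalizeStr (u ++ a :: a :: v) = normalizeStr (u ++ a :: v) := by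
  cases u with
  | nil => simp [normalizeStr, List.destutter_cons']
  | cons x u =>
    simp only [normalizeStr, List.cons_append, List.destutter_cons',
      destutter'_ne_append_cons_cons]

theorem length_normalizeStr_le (l : List α) : (normalizeStr l).length ≤ l.length :=
  (List.destutter_sublist _ l).length_le

theorem pbiStep_append {A C : List α} (B D : List α) (hA : A ≠ []) (hC : C ≠ []) :
    PbiStep (A ++ B ++ C ++ D) (normalizeStr (C ++ B ++ A ++ D)) := by
  have hA : 0 < A.length := List.length_pos_iff.2 hA
  have hC : 0 < C.length := List.length_pos_iff.2 hC
  refine ⟨A.length, A.length + B.length + 1, A.length + B.length + C.length,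
    by omega, by omega, by omega, by simp; omega, ?_⟩
  have hz : A.length + B.length + C.length - (A.length + B.length + 1) + 1 = C.length := by
    omega
  simp (disch := omega) [pbi, pbiRaw, List.drop_append, hz, List.drop_eq_nil_of_le]

end Normalization

section Shrinking

variable {α : Type*} [DecidableEq α]

def PbiShrinks (k : ℕ) (s : List α) : Prop :=
  ∃ t, PbiStep s t ∧ t.IsChain (· ≠ ·) ∧ t.length + k ≤ s.length

theorem pbiShrinks_of_normalizeStr_eq {s A B C D m : List α} {k : ℕ} (hA : A ≠ [])
    (hC : C ≠ []) (hs : s = A ++ B ++ C ++ D)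
    (h : normalizeStr (C ++ B ++ A ++ D) = normalizeStr m) (hm : m.length + k ≤ s.length) :
    PbiShrinks k s := by
  subst hs
  refine ⟨_, pbiStep_append B D hA hC, List.isChain_destutter _ _, ?_⟩
  rw [h]
  exact (Nat.add_le_add_right (length_normalizeStr_le m) k).trans hm

theorem pbiShrinks_one_of_eq {s A B C D u v : List α} {x : α} (hA : A ≠ []) (hC : C ≠ [])
    (hs : s = A ++ B ++ C ++ D) (h : C ++ B ++ A ++ D = u ++ x :: x :: v) :
    PbiShrinks 1 s :=
  pbiShrinks_of_normalizeStr_eq hA hC hs (h ▸ normalizeStr_append_cons_cons u v x) <| by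
    have hl := congrArg List.length h
    simp only [hs, List.length_append, List.length_cons] at hl ⊢
    omega

theorem pbiShrinks_two_of_eq {s A B C D u v u' v' : List α} {x y : α} (hA : A ≠ [])
    (hC : C ≠ []) (hs : s = A ++ B ++ C ++ D) (h₁ : C ++ B ++ A ++ D = u ++ x :: x :: v)
    (h₂ : u ++ x :: v = u' ++ y :: y :: v') : PbiShrinks 2 s :=
  pbiShrinks_of_normalizeStr_eq (m := u' ++ y :: v') hA hC hs
    (by rw [h₁, normalizeStr_append_cons_cons, h₂, normalizeStr_append_cons_cons]) <| by
    have l₁ := congrArg List.length h₁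
    have l₂ := congrArg List.length h₂
    simp only [hs, List.length_append, List.length_cons] at l₁ l₂ ⊢
    omega

theorem pbiShrinks_one_aPa (a : α) (P l : List α) : PbiShrinks 1 (a :: (P ++ a :: l)) :=
  pbiShrinks_one_of_eq (A := a :: P) (B := []) (C := [a]) (D := l) (u := []) (by simp) (by simp)
    (by simp) rfl

theorem pbiShrinks_one_abcb (a b c : α) (l : List α) : PbiShrinks 1 (a :: b :: c :: b :: l) :=
  pbiShrinks_one_of_eq (A := [a, b]) (B := []) (C := [c]) (u := [c, a]) (by simp) (by simp)
    rfl rfl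

theorem pbiShrinks_two_aPaQa (a : α) (P Q l : List α) :
    PbiShrinks 2 (a :: (P ++ a :: (Q ++ a :: l))) :=
  pbiShrinks_two_of_eq (A := a :: P) (B := [a]) (C := Q ++ [a]) (D := l)
    (x := a) (u := Q) (v := a :: (P ++ l)) (y := a) (u' := Q) (v' := P ++ l)
    (by simp) (by simp) (by simp) (by simp) rfl

theorem pbiShrinks_two_abPab (a b : α) (P l : List α) :
    PbiShrinks 2 (a :: b :: (P ++ a :: b :: l)) :=
  pbiShrinks_two_of_eq (A := [a]) (B := b :: P ++ [a]) (C := [b]) (D := l)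
    (x := b) (u := []) (v := P ++ a :: a :: l) (y := a) (u' := b :: P) (v' := l)
    (by simp) (by simp) (by simp) (by simp) (by simp)

theorem pbiShrinks_two_abcPac (a b c : α) (P l : List α) :
    PbiShrinks 2 (a :: b :: c :: (P ++ a :: c :: l)) :=
  pbiShrinks_two_of_eq (A := [a, b]) (B := c :: P ++ [a]) (C := [c]) (D := l)
    (x := c) (u := []) (v := P ++ a :: a :: b :: l) (y := a) (u' := c :: P) (v' := b :: l)
    (by simp) (by simp) (by simp) (by simp) (by simp)

theorem pbiShrinks_two_abacb (a b c : α) (l : List α) :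
    PbiShrinks 2 (a :: b :: a :: c :: b :: l) :=
  pbiShrinks_two_of_eq (A := [a]) (B := [b, a]) (C := [c, b]) (u := [c]) (u' := [c, b])
    (by simp) (by simp) rfl rfl rfl

theorem pbiShrinks_two_abcbcb (a b c : α) (l : List α) :
    PbiShrinks 2 (a :: b :: c :: b :: c :: b :: l) :=
  pbiShrinks_two_of_eq (A := [a, b]) (B := [c]) (C := [b, c]) (u := [b]) (u' := [b, c, a])
    (by simp) (by simp) rfl rfl rfl

theorem exists_stepsTo_two_abcbca {a b c : α} (h : [a, b, c, b, c, a].IsChain (· ≠ ·)) :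
    ∃ t, StepsTo PbiStep 2 [a, b, c, b, c, a] t ∧ t.length ≤ 3 := by
  simp only [List.isChain_cons_cons, List.isChain_singleton, and_true] at h
  obtain ⟨hab, hbc, -, -, hca⟩ := h
  have step₁ : PbiStep [a, b, c, b, c, a] [b, c, a, b, a] := by
    have h := pbiStep_append (A := [a, b]) [c] [a] (C := [b, c]) (by simp) (by simp)
    rwa [show [b, c] ++ [c] ++ [a, b] ++ [a] = [b] ++ c :: c :: [a, b, a] from rfl,
      normalizeStr_append_cons_cons, normalizeStr,
      List.destutter_of_isChain _ ([b] ++ [c, a, b, a]) (by simp [*, Ne.symm])] at h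
  have step₂ := pbiStep_append (A := [b, c]) [a, b] [] (C := [a]) (by simp) (by simp)
  refine ⟨_, ⟨_, step₁, _, step₂, rfl⟩, ?_⟩
  rw [show [a] ++ [a, b] ++ [b, c] ++ [] = [] ++ a :: a :: [b, b, c] from rfl,
    normalizeStr_append_cons_cons, show [] ++ a :: [b, b, c] = [a] ++ b :: b :: [c] from rfl,
    normalizeStr_append_cons_cons]
  exact length_normalizeStr_le _

end Shrinking

theorem pbiShrinks_one_of_four_le_length {s : List (Fin 3)} (hs : s.IsChain (· ≠ ·))
    (h4 : 4 ≤ s.length) : PbiShrinks 1 s := by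
  obtain ⟨p, q, r, w, l, rfl⟩ : ∃ p q r w l, s = p :: q :: r :: w :: l := by
    match s, h4 with
    | p :: q :: r :: w :: l, _ => exact ⟨p, q, r, w, l, rfl⟩
  by_cases hp : p ∈ q :: r :: w :: l
  · obtain ⟨P, R, hPR⟩ := List.append_of_mem hp
    exact hPR ▸ pbiShrinks_one_aPa p P R
  · simp only [List.isChain_cons_cons, List.mem_cons, not_or] at hs hp
    obtain rfl : q = w := by omega
    exact pbiShrinks_one_abcb p q r l

theorem pbiShrinks_two_of_not_mem {a b : Fin 3} {u : List (Fin 3)} (l : List (Fin 3))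
    (hs : (a :: b :: u).IsChain (· ≠ ·)) (ha : a ∉ u) (hu : 4 ≤ u.length) :
    PbiShrinks 2 (a :: b :: (u ++ l)) := by
  obtain ⟨c, d, e, f, u, rfl⟩ : ∃ c d e f u', u = c :: d :: e :: f :: u' := by
    match u, hu with
    | c :: d :: e :: f :: u', _ => exact ⟨c, d, e, f, u', rfl⟩
  simp only [List.isChain_cons_cons, List.mem_cons, not_or] at hs ha
  -- avoiding `a`, the chain alternates between the two other symbols
  obtain rfl : b = d := by omega
  obtain rfl : c = e := by omega
  obtain rfl : b = f := by omega
  exact pbiShrinks_two_abcbcb a b c (u ++ l)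

theorem pbiShrinks_two_or_eq_abcbca {s : List (Fin 3)} (hs : s.IsChain (· ≠ ·))
    (h6 : 6 ≤ s.length) : PbiShrinks 2 s ∨ ∃ a b c, s = [a, b, c, b, c, a] := by
  obtain ⟨a, b, u, rfl⟩ : ∃ a b u, s = a :: b :: u := by
    match s, h6 with
    | a :: b :: u, _ => exact ⟨a, b, u, rfl⟩
  by_cases ha : a ∉ u
  · simpa using Or.inl (pbiShrinks_two_of_not_mem [] hs ha (by simpa using h6))
  obtain ⟨P, Q, rfl, haP⟩ := List.eq_append_cons_of_mem (not_not.1 ha)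
  by_cases haQ : a ∈ Q
  · obtain ⟨Q', R, rfl⟩ := List.append_of_mem haQ
    exact .inl (pbiShrinks_two_aPaQa a (b :: P) Q' R)
  rcases Q with _ | ⟨q, Q⟩
  · have hs' : (a :: b :: P).IsChain (· ≠ ·) :=
      (hs : (a :: b :: P ++ [a]).IsChain _).left_of_append
    obtain hP | hP := le_or_gt 4 P.length
    · exact .inl (pbiShrinks_two_of_not_mem [a] hs' haP hP)
    obtain ⟨c, d, e, rfl⟩ : ∃ c d e, P = [c, d, e] := by
      match P, h6, hP with
      | [c, d, e], _, _ => exact ⟨c, d, e, rfl⟩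
    simp only [List.isChain_cons_cons, List.mem_cons, not_or] at hs' haP
    obtain rfl : b = d := by omega
    obtain rfl : c = e := by omega
    exact .inr ⟨a, b, c, rfl⟩
  simp only [List.mem_cons, not_or] at haQ
  by_cases hqb : q = b
  · subst hqb
    exact .inl (pbiShrinks_two_abPab a q P Q)
  rcases P with _ | ⟨p, P⟩
  · obtain ⟨w, Q, rfl⟩ : ∃ w Q', Q = w :: Q' := by
      match Q, h6 with
      | w :: Q', _ => exact ⟨w, Q', rfl⟩
    simp only [List.nil_append, List.isChain_cons_cons, List.mem_cons, not_or] at hs haQ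
    obtain rfl : b = w := by omega
    exact .inl (pbiShrinks_two_abacb a b q Q)
  · simp only [List.cons_append, List.isChain_cons_cons, List.mem_cons, not_or] at hs haP
    obtain rfl : q = p := by omega
    exact .inl (pbiShrinks_two_abcPac a b q P Q)

section Sorting

variable {α : Type*} [DecidableEq α]

def pbiSuccessors (s : List α) : List (List α) :=
  let r := List.range (s.length + 1)
  r.flatMap fun x => r.flatMap fun y =>
    (r.filter fun z => 1 ≤ x ∧ x < y ∧ y ≤ z).map fun z => pbi s x y z

theorem pbiStep_of_mem_pbiSuccessors {s t : List α} (h : t ∈ pbiSuccessors s) :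
    PbiStep s t := by
  simp only [pbiSuccessors, List.mem_flatMap, List.mem_map, List.mem_filter, List.mem_range,
    decide_eq_true_eq] at h
  obtain ⟨x, -, y, -, z, ⟨hz, hx, hxy, hyz⟩, rfl⟩ := h
  exact ⟨x, y, z, hx, hxy, hyz, by omega, rfl⟩

variable [LE α]

def PbiSortableWithin (k : ℕ) (s : List α) : Prop :=
  ∃ j ≤ k, ∃ t, StepsTo PbiStep j s t ∧ t.Pairwise (· ≤ ·)

theorem PbiSortableWithin.mono {k k' : ℕ} {s : List α} (h : PbiSortableWithin k s)
    (hk : k ≤ k') : PbiSortableWithin k' s :=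
  let ⟨j, hj, t, hst, ht⟩ := h
  ⟨j, hj.trans hk, t, hst, ht⟩

theorem PbiSortableWithin.of_stepsTo {j k : ℕ} {s u : List α} (hu : PbiSortableWithin k u) :
    StepsTo PbiStep j s u → PbiSortableWithin (j + k) s := by
  induction j generalizing s with
  | zero => rintro rfl; simpa using hu
  | succ j ih =>
    rintro ⟨v, hsv, hvu⟩
    obtain ⟨i, hi, t, hvt, ht⟩ := ih hvu
    exact ⟨i + 1, by omega, t, ⟨v, hsv, hvt⟩, ht⟩

theorem PbiSortableWithin.of_pbiStep {k : ℕ} {s u : List α} (hu : PbiSortableWithin k u)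
    (h : PbiStep s u) : PbiSortableWithin (k + 1) s := by
  simpa [add_comm] using hu.of_stepsTo (j := 1) ⟨u, h, rfl⟩

variable [DecidableRel (α := α) (· ≤ ·)]

def canPbiSortWithin : ℕ → List α → Bool
  | 0, s => decide (s.Pairwise (· ≤ ·))
  | k + 1, s => decide (s.Pairwise (· ≤ ·)) || (pbiSuccessors s).any (canPbiSortWithin k)

theorem PbiSortableWithin.of_canPbiSortWithin {k : ℕ} {s : List α}
    (h : canPbiSortWithin k s) : PbiSortableWithin k s := by
  induction k generalizing s with
  | zero => exact ⟨0, le_rfl, s, rfl, by simpa [canPbiSortWithin] using h⟩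
  | succ k ih =>
    simp only [canPbiSortWithin, Bool.or_eq_true, decide_eq_true_eq, List.any_eq_true] at h
    obtain hs | ⟨t, ht, hk⟩ := h
    · exact ⟨0, by omega, s, rfl, hs⟩
    · exact (ih hk).of_pbiStep (pbiStep_of_mem_pbiSuccessors ht)

end Sorting

theorem pbiSortableWithin_two_of_length_le_three {s : List (Fin 3)} (h : s.length ≤ 3) :
    PbiSortableWithin 2 s := by
  have key : ∀ a b c : Fin 3, canPbiSortWithin 2 ([] : List (Fin 3)) ∧
      canPbiSortWithin 2 [a] ∧ canPbiSortWithin 2 [a, b] ∧ canPbiSortWithin 2 [a, b, c] := by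
    decide
  apply PbiSortableWithin.of_canPbiSortWithin
  match s, h with
  | [], _ => exact (key 0 0 0).1
  | [a], _ => exact (key a 0 0).2.1
  | [a, b], _ => exact (key a b 0).2.2.1
  | [a, b, c], _ => exact (key a b c).2.2.2

theorem pbiSortableWithin_of_length_le {s : List (Fin 3)} {n : ℕ} (hs : s.IsChain (· ≠ ·))
    (hn : 4 ≤ n) (hsn : s.length ≤ n) : PbiSortableWithin ((n - 1) / 2 + 2) s := by
  induction n using Nat.strong_induction_on generalizing s with
  | _ n ih =>
  obtain hlt | rfl := hsn.lt_or_eq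
  · obtain rfl | h5 := (show n = 4 ∨ 5 ≤ n by omega)
    · exact (pbiSortableWithin_two_of_length_le_three (by omega)).mono (by omega)
    · exact (ih (n - 1) (by omega) hs (by omega) (by omega)).mono (by omega)
  obtain h5 | h6 := le_or_gt s.length 5
  · obtain ⟨t, hst, ht, htl⟩ := pbiShrinks_one_of_four_le_length hs hn
    obtain h4 | h5 : s.length = 4 ∨ s.length = 5 := by omega
    · exact ((pbiSortableWithin_two_of_length_le_three (by omega)).of_pbiStep hst).mono
        (by omega)
    · exact ((ih 4 (by omega) ht le_rfl (by omega)).of_pbiStep hst).mono (by omega)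
  rcases pbiShrinks_two_or_eq_abcbca hs h6 with ⟨t, hst, ht, htl⟩ | ⟨a, b, c, rfl⟩
  · exact ((ih (s.length - 2) (by omega) ht (by omega) (by omega)).of_pbiStep hst).mono
      (by omega)
  · obtain ⟨t, hst, htl⟩ := exists_stepsTo_two_abcbca hs
    exact ((pbiSortableWithin_two_of_length_le_three htl).of_stepsTo hst).mono (by simp)

theorem stmt_17_general (s : List (Fin 3)) (hnorm : s.Chain' (· ≠ ·)) :
    ∃ k, k ≤ (s.length - 2 + 1) / 2 + 2 ∧
      ∃ t, StepsTo PbiStep k s t ∧ t.Pairwise (· ≤ ·) := by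
  obtain h3 | h4 := le_or_gt s.length 3
  · exact (pbiSortableWithin_two_of_length_le_three h3).mono (by omega)
  · exact (pbiSortableWithin_of_length_le hnorm h4 le_rfl).mono (by omega)

/-- For a fully normalized ternary string s of length n, the
sorting distance under prefix block-interchanges is at most ⌈(n−2)/2⌉ + 2. -/
theorem stmt_17 (s : List (Fin 3)) (hnorm : s.Chain' (· ≠ ·))
    (h0 : 0 ∈ s) (h1 : 1 ∈ s) (h2 : 2 ∈ s) :
    ∃ k, k ≤ (s.length - 2 + 1) / 2 + 2 ∧
      ∃ t, StepsTo PbiStep k s t ∧ t.Pairwise (· ≤ ·) :=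
  stmt_17_general s hnorm
end
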